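/- Let p be an odd prime, n = 2^k · m with k ≥ 1 and m odd, s = 2^k, and let ℓ be an odd prime dividing p^n + 1. Then the Legendre symbol (p^m / ℓ) = 1 if and only if ℓ ≡ 1 (mod 4s). -/

import Mathlib

/-!
If `ℓ ∣ p ^ n + 1` then `t = p ^ m` satisfies `t ^ s = -1` in `ZMod ℓ`, so `t` has order `2 s`.
By Euler's criterion `t` is a square iff `t ^ ((ℓ - 1) / 2) = 1`, i.e. iff `2 s ∣ (ℓ - 1) / 2`,
i.e. iff `4 s ∣ ℓ - 1`.
-/

theorem orderOf_eq_two_pow_succ_of_pow_two_pow_eq_neg_one {M : Type*} [Monoid M] [HasDistribNeg M]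
    {t : M} {k : ℕ} (hneg : (-1 : M) ≠ 1) (ht : t ^ 2 ^ k = -1) : orderOf t = 2 ^ (k + 1) :=
  orderOf_eq_prime_pow (ht ▸ hneg) (by rw [pow_succ, pow_mul, ht, neg_one_sq])

theorem Nat.dvd_sub_one_iff_mod_eq_one {a d : ℕ} (hd : 1 < d) (ha : 1 ≤ a) :
    d ∣ a - 1 ↔ a % d = 1 := by
  rw [← Nat.modEq_iff_dvd' ha, Nat.ModEq, Nat.mod_eq_of_lt hd, eq_comm]

theorem ZMod.isSquare_iff_two_mul_orderOf_dvd {ℓ : ℕ} [Fact ℓ.Prime] (hℓ : Odd ℓ) {t : ZMod ℓ}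
    (ht : t ≠ 0) : IsSquare t ↔ 2 * orderOf t ∣ ℓ - 1 := by
  have htwo : 2 ∣ ℓ - 1 := (Nat.Odd.sub_odd hℓ odd_one).two_dvd
  have hhalf : ℓ / 2 = (ℓ - 1) / 2 := by
    obtain ⟨j, rfl⟩ := hℓ
    omega
  rw [ZMod.euler_criterion ℓ ht, ← orderOf_dvd_iff_pow_eq_one, hhalf,
    Nat.dvd_div_iff_mul_dvd htwo, mul_comm]

theorem legendre_eq_one_iff_mod_four_s_general
    (p ℓ n k m : ℕ) [Fact ℓ.Prime] (hlodd : Odd ℓ)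
    (hn : n = 2 ^ k * m)
    (hdvd : ℓ ∣ p ^ n + 1) :
    legendreSym ℓ ((p : ℤ) ^ m) = 1 ↔ ℓ % (4 * 2 ^ k) = 1 := by
  have hℓ : ℓ.Prime := Fact.out
  have : Fact (2 < ℓ) := ⟨hℓ.two_le.lt_of_ne fun h ↦ by subst h; exact absurd hlodd (by decide)⟩
  set t : ZMod ℓ := (((p : ℤ) ^ m : ℤ) : ZMod ℓ)
  have ht : t ^ 2 ^ k = -1 := by
    have hzero : ((p ^ n + 1 : ℕ) : ZMod ℓ) = 0 := (ZMod.natCast_eq_zero_iff _ _).mpr hdvd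
    push_cast [t, ← pow_mul, mul_comm m, ← hn] at hzero ⊢
    linear_combination hzero
  have ht0 : t ≠ 0 := fun h ↦ by simp [h] at ht
  have hmod : 1 < 2 * 2 ^ (k + 1) := Nat.one_lt_two_pow_iff.mpr (by omega) |>.trans_le
    (Nat.le_mul_of_pos_left _ two_pos)
  rw [legendreSym.eq_one_iff ℓ ht0, ZMod.isSquare_iff_two_mul_orderOf_dvd hlodd ht0,
    orderOf_eq_two_pow_succ_of_pow_two_pow_eq_neg_one ZMod.neg_one_ne_one ht,
    show 4 * 2 ^ k = 2 * 2 ^ (k + 1) by ring, Nat.dvd_sub_one_iff_mod_eq_one hmod hℓ.one_le]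

theorem legendre_eq_one_iff_mod_four_s
    (p ℓ n k m : ℕ) [Fact ℓ.Prime] (hp : p.Prime) (hpodd : Odd p) (hlodd : Odd ℓ)
    (hk : 1 ≤ k) (hm : Odd m) (hn : n = 2 ^ k * m)
    (hdvd : ℓ ∣ p ^ n + 1) :
    legendreSym ℓ ((p : ℤ) ^ m) = 1 ↔ ℓ % (4 * 2 ^ k) = 1 :=
  legendre_eq_one_iff_mod_four_s_general p ℓ n k m hlodd hn hdvd
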